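/- arXiv:1609.01102 — 3 statements merged into one kernel-verified Lean document; each statement's English description precedes it below -/
import Mathlib

section
/- There is a constant C such that for every positive integer k, the number r_k^{FO;gr} of equivalence classes of finite graphs under ≡_k^{FO;gr} satisfies r_k^{FO;gr} ≤ T(k + 2 + log*(k)) + C. -/
/-- The tower function: `tower 1 = 2` and `tower (s+1) = 2 ^ tower s`. -/
def tower : ℕ → ℕ
  | 0 => 1
  | s + 1 => 2 ^ tower s

/-- `logStar k = min { i | tower i ≥ k }`. -/
noncomputable def logStar (k : ℕ) : ℕ := sInf {i : ℕ | k ≤ tower i}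

/-- First-order formulas of graphs with `n` free (vertex) variables. -/
inductive FOForm : ℕ → Type
  | adj {n : ℕ} : Fin n → Fin n → FOForm n
  | eq  {n : ℕ} : Fin n → Fin n → FOForm n
  | not {n : ℕ} : FOForm n → FOForm n
  | and {n : ℕ} : FOForm n → FOForm n → FOForm n
  | all {n : ℕ} : FOForm (n + 1) → FOForm n

/-- Quantifier depth of a first-order formula. -/
def FOForm.depth : ∀ {n : ℕ}, FOForm n → ℕ
  | _, .adj _ _ => 0
  | _, .eq _ _ => 0
  | _, .not φ => φ.depth
  | _, .and φ ψ => max φ.depth ψ.depth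
  | _, .all φ => φ.depth + 1

/-- Satisfaction of a first-order formula on a graph under a valuation. -/
def FOForm.Sat {V : Type} (G : SimpleGraph V) : ∀ {n : ℕ}, FOForm n → (Fin n → V) → Prop
  | _, .adj i j, v => G.Adj (v i) (v j)
  | _, .eq i j, v => v i = v j
  | _, .not φ, v => ¬ FOForm.Sat G φ v
  | _, .and φ ψ, v => FOForm.Sat G φ v ∧ FOForm.Sat G ψ v
  | _, .all φ, v => ∀ x : V, FOForm.Sat G φ (Fin.snoc v x)

/-- The type of finite graphs (up to the choice of vertex labels `Fin n`). -/
def FinGraph : Type := Σ n : ℕ, SimpleGraph (Fin n)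

/-- `G ≡ₖ^{FO;gr} H`: the graphs satisfy the same FO sentences of quantifier
depth at most `k`. -/
def FOEquiv (k : ℕ) {α β : Type} (G : SimpleGraph α) (H : SimpleGraph β) : Prop :=
  ∀ φ : FOForm 0, φ.depth ≤ k →
    (FOForm.Sat G φ (fun i => i.elim0) ↔ FOForm.Sat H φ (fun i => i.elim0))

def foSetoid (k : ℕ) : Setoid FinGraph where
  r G H := FOEquiv k G.2 H.2
  iseqv := ⟨fun _ _ _ => Iff.rfl, fun h φ hφ => (h φ hφ).symm,
    fun h1 h2 φ hφ => (h1 φ hφ).trans (h2 φ hφ)⟩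

/-- The set of `≡ₖ^{FO;gr}`-equivalence classes of finite graphs. -/
def FOGraphClasses (k : ℕ) : Type := Quotient (foSetoid k)

/-! ### Type spaces -/

def TS : ℕ → ℕ → Type
  | 0, n => (Fin n → Fin n → Prop) × (Fin n → Fin n → Prop)
  | k+1, n => TS k n × Set (TS k (n+1))

instance TS.finite : ∀ k n, Finite (TS k n)
  | 0, _ => by unfold TS; infer_instance
  | k+1, n => by
    have := TS.finite k n
    have := TS.finite k (n+1)
    unfold TS; infer_instance

def tp : ∀ (k n : ℕ) {V : Type}, SimpleGraph V → (Fin n → V) → TS k n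
  | 0, _, _, G, v => (fun i j => G.Adj (v i) (v j), fun i j => v i = v j)
  | k+1, n, _, G, v => (tp k n G v, {t | ∃ x, tp k (n+1) G (Fin.snoc v x) = t})

theorem tp_zero_of {k n : ℕ} {V W : Type} {G : SimpleGraph V} {H : SimpleGraph W}
    {v : Fin n → V} {w : Fin n → W} (h : tp k n G v = tp k n H w) :
    tp 0 n G v = tp 0 n H w := by
  induction k with
  | zero => exact h
  | succ k ih => exact ih (congrArg Prod.fst h)

theorem tp_sat {V W : Type} (G : SimpleGraph V) (H : SimpleGraph W) :
    ∀ {n : ℕ} (φ : FOForm n) (k : ℕ), φ.depth ≤ k → ∀ (v : Fin n → V) (w : Fin n → W),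
      tp k n G v = tp k n H w → (φ.Sat G v ↔ φ.Sat H w) := by
  intro n φ
  induction φ with
  | adj i j =>
    intro k _ v w h
    have h0 := tp_zero_of h
    have := congrFun (congrFun (congrArg Prod.fst h0) i) j
    simp only [tp] at this
    show G.Adj (v i) (v j) ↔ H.Adj (w i) (w j)
    exact iff_of_eq this
  | eq i j =>
    intro k _ v w h
    have h0 := tp_zero_of h
    have := congrFun (congrFun (congrArg Prod.snd h0) i) j
    simp only [tp] at this
    show v i = v j ↔ w i = w j
    exact iff_of_eq this
  | not φ ih =>
    intro k hk v w h
    exact not_congr (ih k hk v w h)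
  | and φ ψ ih1 ih2 =>
    intro k hk v w h
    exact and_congr (ih1 k (le_trans (le_max_left _ _) hk) v w h)
      (ih2 k (le_trans (le_max_right _ _) hk) v w h)
  | all φ ih =>
    intro k hk v w h
    match k, hk with
    | m+1, hk =>
      have hd : φ.depth ≤ m := Nat.succ_le_succ_iff.mp hk
      have hs : {t | ∃ x, tp m _ G (Fin.snoc v x) = t}
          = {t | ∃ y, tp m _ H (Fin.snoc w y) = t} := congrArg Prod.snd h
      constructor
      · intro hall y
        have hy : tp m _ H (Fin.snoc w y) ∈ {t | ∃ y, tp m _ H (Fin.snoc w y) = t} := ⟨y, rfl⟩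
        rw [← hs] at hy
        obtain ⟨x, hx⟩ := hy
        exact (ih m hd _ _ hx).mp (hall x)
      · intro hall x
        have hx : tp m _ G (Fin.snoc v x) ∈ {t | ∃ x, tp m _ G (Fin.snoc v x) = t} := ⟨x, rfl⟩
        rw [hs] at hx
        obtain ⟨y, hy⟩ := hx
        exact (ih m hd _ _ hy.symm).mpr (hall y)

theorem foequiv_of_tp {k : ℕ} {V W : Type} {G : SimpleGraph V} {H : SimpleGraph W}
    (h : tp k 0 G (fun i => i.elim0) = tp k 0 H (fun i => i.elim0)) : FOEquiv k G H :=
  fun φ hφ => tp_sat G H φ k hφ _ _ h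

open Classical in
noncomputable def graphOfType (k : ℕ) (t : TS k 0) : FinGraph :=
  if h : ∃ G : FinGraph, tp k 0 G.2 (fun i => i.elim0) = t then h.choose else ⟨0, ⊥⟩

noncomputable def classOfType (k : ℕ) (t : TS k 0) : FOGraphClasses k :=
  Quotient.mk (foSetoid k) (graphOfType k t)

theorem classOfType_surj (k : ℕ) : Function.Surjective (classOfType k) := by
  intro c
  induction c using Quotient.ind with
  | _ G =>
    refine ⟨tp k 0 G.2 (fun i => i.elim0), ?_⟩
    have h : ∃ G' : FinGraph, tp k 0 G'.2 (fun i => i.elim0)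
        = tp k 0 G.2 (fun i => i.elim0) := ⟨G, rfl⟩
    have hg : graphOfType k (tp k 0 G.2 (fun i => i.elim0)) = h.choose := dif_pos h
    show Quotient.mk (foSetoid k) _ = Quotient.mk (foSetoid k) G
    rw [hg]
    exact Quotient.sound (foequiv_of_tp h.choose_spec)

/-! ### Counting -/

def FB : ℕ → ℕ → ℕ
  | 0, n => 2 ^ (2 * n ^ 2 + 2)
  | k+1, n => 2 ^ (2 * FB k (n+1))

theorem card_prop : Nat.card Prop = 2 := by
  rw [Nat.card_congr Equiv.propEquivBool, Nat.card_eq_fintype_card, Fintype.card_bool]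

theorem card_set_le {α : Type} [Finite α] : Nat.card (Set α) = 2 ^ Nat.card α := by
  have : Nat.card (Set α) = Nat.card (α → Prop) := rfl
  rw [this, Nat.card_fun, card_prop]

theorem FB_pos : ∀ k n, 0 < FB k n
  | 0, n => Nat.pow_pos (by norm_num)
  | k+1, n => Nat.pow_pos (by norm_num)

theorem FB_mono_n : ∀ k n, FB k n ≤ FB k (n+1)
  | 0, n => Nat.pow_le_pow_right (by norm_num)
      (by have : (n+1)^2 = n^2 + 2*n + 1 := by ring
          omega)
  | k+1, n => Nat.pow_le_pow_right (by norm_num)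
      (Nat.mul_le_mul_left _ (FB_mono_n k (n+1)))

theorem FB_le_two_pow (k n : ℕ) : FB k n ≤ 2 ^ FB k (n+1) :=
  le_trans (FB_mono_n k n) (le_of_lt (Nat.lt_two_pow_self))

theorem card_TS_le : ∀ k n, Nat.card (TS k n) ≤ FB k n := by
  intro k
  induction k with
  | zero =>
    intro n
    show Nat.card ((Fin n → Fin n → Prop) × (Fin n → Fin n → Prop)) ≤ _
    have h1 : Nat.card (Fin n → Fin n → Prop) = 2 ^ (n * n) := by
      rw [Nat.card_fun, Nat.card_fun, card_prop, Nat.card_eq_fintype_card, Fintype.card_fin,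
        ← pow_mul]
    rw [Nat.card_prod, h1]
    show _ ≤ 2 ^ (2 * n ^ 2 + 2)
    calc 2 ^ (n * n) * 2 ^ (n * n) = 2 ^ (n * n + n * n) := by rw [pow_add]
    _ ≤ 2 ^ (2 * n ^ 2 + 2) := Nat.pow_le_pow_right (by norm_num) (by nlinarith)
  | succ k ih =>
    intro n
    show Nat.card (TS k n × Set (TS k (n+1))) ≤ _
    rw [Nat.card_prod, card_set_le]
    show _ ≤ 2 ^ (2 * FB k (n+1))
    calc Nat.card (TS k n) * 2 ^ Nat.card (TS k (n+1))
        ≤ FB k n * 2 ^ FB k (n+1) :=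
          Nat.mul_le_mul (ih n) (Nat.pow_le_pow_right (by norm_num) (ih (n+1)))
    _ ≤ 2 ^ FB k (n+1) * 2 ^ FB k (n+1) := Nat.mul_le_mul_right _ (FB_le_two_pow k n)
    _ = 2 ^ (2 * FB k (n+1)) := by rw [← pow_add, two_mul]

/-! ### Arithmetic: FB versus tower -/

theorem tower_pos (m : ℕ) : 0 < tower m := by
  cases m with
  | zero => exact Nat.one_pos
  | succ m => exact Nat.pow_pos (by norm_num)

theorem self_le_tower (m : ℕ) : m + 1 ≤ tower m := by
  induction m with
  | zero => simp [tower]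
  | succ m ih =>
    show m + 2 ≤ 2 ^ tower m
    calc m + 2 ≤ tower m + 1 := by omega
    _ ≤ 2 ^ tower m := Nat.lt_two_pow_self

theorem le_tower_logStar (k : ℕ) : k ≤ tower (logStar k) := by
  have hne : {i : ℕ | k ≤ tower i}.Nonempty :=
    ⟨k, le_trans (by omega) (self_le_tower k)⟩
  exact Nat.sInf_mem hne

theorem two_mul_pow_add_two_le (a : ℕ) (ha : 1 ≤ a) : 2 * 2 ^ a + 2 ≤ 2 ^ (a + 2) := by
  have h2 : 2 ≤ 2 ^ a := by
    calc (2:ℕ) = 2 ^ 1 := rfl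
    _ ≤ 2 ^ a := Nat.pow_le_pow_right (by norm_num) ha
  have h4 : 2 ^ (a + 2) = 4 * 2 ^ a := by rw [pow_add]; ring
  omega

theorem FB_chain : ∀ j n m, 2 ^ (2 * (n + j) ^ 2 + 4) ≤ tower m →
    2 * FB j n + 2 ≤ tower (m + j) := by
  intro j
  induction j with
  | zero =>
    intro n m hm
    have hm' : 2 ^ (2 * n ^ 2 + 4) ≤ tower m := by simpa using hm
    show 2 * 2 ^ (2 * n ^ 2 + 2) + 2 ≤ tower m
    calc 2 * 2 ^ (2 * n ^ 2 + 2) + 2 ≤ 2 ^ (2 * n ^ 2 + 2 + 2) :=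
          two_mul_pow_add_two_le _ (by omega)
    _ ≤ tower m := by
          have : 2 * n ^ 2 + 2 + 2 = 2 * n ^ 2 + 4 := by omega
          rw [this]; exact hm'
  | succ j ih =>
    intro n m hm
    have h1 : 2 * FB j (n+1) + 2 ≤ tower (m + j) := by
      apply ih (n+1) m
      have : (n + 1) + j = n + (j + 1) := by omega
      rw [this]; exact hm
    have ha : 1 ≤ 2 * FB j (n+1) := by have := FB_pos j (n+1); omega
    show 2 * 2 ^ (2 * FB j (n+1)) + 2 ≤ tower (m + j + 1)
    calc 2 * 2 ^ (2 * FB j (n+1)) + 2 ≤ 2 ^ (2 * FB j (n+1) + 2) :=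
          two_mul_pow_add_two_le _ ha
    _ ≤ 2 ^ tower (m + j) := Nat.pow_le_pow_right (by norm_num) (by omega)
    _ = tower (m + j + 1) := rfl

theorem two_pow_ge (k : ℕ) (hk : 7 ≤ k) : 2 * k ^ 2 + 4 ≤ 2 ^ k := by
  induction k with
  | zero => omega
  | succ k ih =>
    rcases Nat.lt_or_ge k 7 with h | h
    · have : k = 6 := by omega
      subst this; norm_num
    · have hik := ih (by omega)
      have h2 : 2 * (k+1)^2 + 4 ≤ 2 * (2 * k ^ 2 + 4) := by nlinarith
      calc 2 * (k+1)^2 + 4 ≤ 2 * (2 * k ^ 2 + 4) := h2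
      _ ≤ 2 * 2 ^ k := by omega
      _ = 2 ^ (k+1) := (pow_succ' 2 k).symm

theorem FB_le_tower (k : ℕ) (hk : 7 ≤ k) : FB k 0 ≤ tower (k + 2 + logStar k) := by
  have hbase : 2 ^ (2 * (0 + k) ^ 2 + 4) ≤ tower (logStar k + 2) := by
    show 2 ^ (2 * (0 + k) ^ 2 + 4) ≤ 2 ^ tower (logStar k + 1)
    apply Nat.pow_le_pow_right (by norm_num)
    show _ ≤ 2 ^ tower (logStar k)
    calc 2 * (0 + k) ^ 2 + 4 = 2 * k ^ 2 + 4 := by ring_nf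
    _ ≤ 2 ^ k := two_pow_ge k hk
    _ ≤ 2 ^ tower (logStar k) := Nat.pow_le_pow_right (by norm_num) (le_tower_logStar k)
  have := FB_chain k 0 (logStar k + 2) hbase
  have heq : logStar k + 2 + k = k + 2 + logStar k := by omega
  rw [heq] at this
  omega

theorem FB_mono_k : ∀ k, FB k 0 ≤ FB (k+1) 0 := by
  intro k
  show FB k 0 ≤ 2 ^ (2 * FB k 1)
  calc FB k 0 ≤ FB k 1 := FB_mono_n k 0
  _ ≤ 2 * FB k 1 := by omega
  _ ≤ 2 ^ (2 * FB k 1) := le_of_lt (Nat.lt_two_pow_self)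

theorem FB_mono_k' {j k : ℕ} (h : j ≤ k) : FB j 0 ≤ FB k 0 := by
  induction k with
  | zero =>
    have : j = 0 := by omega
    subst this; exact le_rfl
  | succ k ih =>
    rcases Nat.lt_or_ge j (k+1) with h' | h'
    · exact le_trans (ih (by omega)) (FB_mono_k k)
    · have : j = k + 1 := by omega
      subst this; exact le_rfl

/-- there is a constant `C` such that for every positive integer
`k`, the number of `≡ₖ^{FO;gr}`-classes of finite graphs is at most
`tower (k + 2 + logStar k) + C`. -/
theorem fo_graph_classes_bound :
    ∃ C : ℕ, ∀ k : ℕ, 0 < k →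
      Finite (FOGraphClasses k) ∧
        Nat.card (FOGraphClasses k) ≤ tower (k + 2 + logStar k) + C := by
  refine ⟨FB 6 0, fun k hk => ?_⟩
  have hfin : Finite (FOGraphClasses k) := Finite.of_surjective _ (classOfType_surj k)
  refine ⟨hfin, ?_⟩
  have hcard : Nat.card (FOGraphClasses k) ≤ Nat.card (TS k 0) :=
    Nat.card_le_card_of_surjective _ (classOfType_surj k)
  have h2 : Nat.card (FOGraphClasses k) ≤ FB k 0 := le_trans hcard (card_TS_le k 0)
  rcases Nat.lt_or_ge k 7 with h | h
  · have : FB k 0 ≤ FB 6 0 := FB_mono_k' (by omega)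
    omega
  · have := FB_le_tower k h
    omega
end

section
/- Let k, t, l be nonnegative integers with t + l = k. For the vocabulary of graphs (one binary relation ∼ and no constants), |EHR(k,t,l)| ≤ 2^{k²−k}. For the vocabulary of rooted trees (the binary parent–child relation P and one constant R): if k ≥ 5, then |EHR(k,t,l)| ≤ 2^{2^k − 2}, and if k = 4, then |EHR(4,t,l)| ≤ 3·2^{13}. -/
/-- Monadic second-order formulas of graphs with `n` free vertex variables and
`m` free set variables. -/
inductive MSOForm : ℕ → ℕ → Type
  | adj {n m : ℕ} : Fin n → Fin n → MSOForm n m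
  | eq  {n m : ℕ} : Fin n → Fin n → MSOForm n m
  | mem {n m : ℕ} : Fin n → Fin m → MSOForm n m
  | not {n m : ℕ} : MSOForm n m → MSOForm n m
  | and {n m : ℕ} : MSOForm n m → MSOForm n m → MSOForm n m
  | allV {n m : ℕ} : MSOForm (n + 1) m → MSOForm n m
  | allS {n m : ℕ} : MSOForm n (m + 1) → MSOForm n m

/-- Quantifier depth (counting both kinds of quantifiers) of an MSO formula. -/
def MSOForm.depth : ∀ {n m : ℕ}, MSOForm n m → ℕ
  | _, _, .adj _ _ => 0
  | _, _, .eq _ _ => 0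
  | _, _, .mem _ _ => 0
  | _, _, .not φ => φ.depth
  | _, _, .and φ ψ => max φ.depth ψ.depth
  | _, _, .allV φ => φ.depth + 1
  | _, _, .allS φ => φ.depth + 1

/-- Satisfaction of an MSO formula on a graph under valuations of the vertex
variables and the set variables. -/
def MSOForm.Sat {V : Type} (G : SimpleGraph V) :
    ∀ {n m : ℕ}, MSOForm n m → (Fin n → V) → (Fin m → Set V) → Prop
  | _, _, .adj i j, v, _ => G.Adj (v i) (v j)
  | _, _, .eq i j, v, _ => v i = v j
  | _, _, .mem i j, v, s => v i ∈ s j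
  | _, _, .not φ, v, s => ¬ MSOForm.Sat G φ v s
  | _, _, .and φ ψ, v, s => MSOForm.Sat G φ v s ∧ MSOForm.Sat G ψ v s
  | _, _, .allV φ, v, s => ∀ x : V, MSOForm.Sat G φ (Fin.snoc v x) s
  | _, _, .allS φ, v, s => ∀ X : Set V, MSOForm.Sat G φ v (Fin.snoc s X)

/-- A finite rooted tree: a tree on `Fin n` together with a distinguished root. -/
structure FinRootedTree where
  n : ℕ
  graph : SimpleGraph (Fin n)
  isTree : graph.IsTree
  root : Fin n

/-- The parent–child relation of a rooted tree: `x` is the parent of `y`. -/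
def FinRootedTree.parent (T : FinRootedTree) (x y : Fin T.n) : Prop :=
  T.graph.Adj x y ∧ T.graph.dist T.root y = T.graph.dist T.root x + 1

/-- MSO formulas in the language of rooted trees (parent–child relation `P`,
equality, and root constant, interpreted as `none`) with `n` free vertex
variables and `m` free set variables. -/
inductive TreeForm : ℕ → ℕ → Type
  | par {n m : ℕ} : Option (Fin n) → Option (Fin n) → TreeForm n m
  | eq  {n m : ℕ} : Option (Fin n) → Option (Fin n) → TreeForm n m
  | mem {n m : ℕ} : Option (Fin n) → Fin m → TreeForm n m
  | not {n m : ℕ} : TreeForm n m → TreeForm n m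
  | and {n m : ℕ} : TreeForm n m → TreeForm n m → TreeForm n m
  | allV {n m : ℕ} : TreeForm (n + 1) m → TreeForm n m
  | allS {n m : ℕ} : TreeForm n (m + 1) → TreeForm n m

/-- Quantifier depth of an MSO rooted-tree formula. -/
def TreeForm.depth : ∀ {n m : ℕ}, TreeForm n m → ℕ
  | _, _, .par _ _ => 0
  | _, _, .eq _ _ => 0
  | _, _, .mem _ _ => 0
  | _, _, .not φ => φ.depth
  | _, _, .and φ ψ => max φ.depth ψ.depth
  | _, _, .allV φ => φ.depth + 1
  | _, _, .allS φ => φ.depth + 1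

/-- Interpretation of a term (a variable or the root constant). -/
def interpTerm {V : Type} (r : V) {n : ℕ} (v : Fin n → V) : Option (Fin n) → V
  | some i => v i
  | none => r

/-- Satisfaction of an MSO rooted-tree formula on a finite rooted tree. -/
def TreeForm.Sat (T : FinRootedTree) :
    ∀ {n m : ℕ}, TreeForm n m → (Fin n → Fin T.n) → (Fin m → Set (Fin T.n)) → Prop
  | _, _, .par a b, v, _ => T.parent (interpTerm T.root v a) (interpTerm T.root v b)
  | _, _, .eq a b, v, _ => interpTerm T.root v a = interpTerm T.root v b
  | _, _, .mem a j, v, s => interpTerm T.root v a ∈ s j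
  | _, _, .not φ, v, s => ¬ TreeForm.Sat T φ v s
  | _, _, .and φ ψ, v, s => TreeForm.Sat T φ v s ∧ TreeForm.Sat T ψ v s
  | _, _, .allV φ, v, s => ∀ x, TreeForm.Sat T φ (Fin.snoc v x) s
  | _, _, .allS φ, v, s => ∀ X, TreeForm.Sat T φ v (Fin.snoc s X)

/-- `T ≡ₖ^{MSO;tr} T'`: the two rooted trees satisfy the same MSO sentences of
quantifier depth at most `k`. -/
def MSOTreeEquiv (k : ℕ) (T T' : FinRootedTree) : Prop :=
  ∀ φ : TreeForm 0 0, φ.depth ≤ k →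
    (TreeForm.Sat T φ (fun i => i.elim0) (fun i => i.elim0) ↔
      TreeForm.Sat T' φ (fun i => i.elim0) (fun i => i.elim0))

/-- A finite graph with `t` marked vertices and `l` marked vertex subsets. -/
def GMarked (t l : ℕ) : Type :=
  Σ G : FinGraph, (Fin t → Fin G.1) × (Fin l → Set (Fin G.1))

/-- Two marked graphs are `≡ₖ^{MSO}`-equivalent if they satisfy the same MSO
formulas with `t` free vertex variables and `l` free set variables of
quantifier depth at most `k - t - l`. -/
def GMarkedEquiv (k t l : ℕ) (x y : GMarked t l) : Prop :=
  ∀ φ : MSOForm t l, φ.depth ≤ k - t - l →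
    (MSOForm.Sat x.1.2 φ x.2.1 x.2.2 ↔ MSOForm.Sat y.1.2 φ y.2.1 y.2.2)

def gMarkedSetoid (k t l : ℕ) : Setoid (GMarked t l) where
  r := GMarkedEquiv k t l
  iseqv := ⟨fun _ _ _ => Iff.rfl, fun h φ hφ => (h φ hφ).symm,
    fun h1 h2 φ hφ => (h1 φ hφ).trans (h2 φ hφ)⟩

/-- `EHR(k,t,l)` for the vocabulary of graphs. -/
def GraphEHR (k t l : ℕ) : Type := Quotient (gMarkedSetoid k t l)

/-- A finite rooted tree with `t` marked vertices and `l` marked vertex subsets. -/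
def TMarked (t l : ℕ) : Type :=
  Σ T : FinRootedTree, (Fin t → Fin T.n) × (Fin l → Set (Fin T.n))

/-- Two marked rooted trees are `≡ₖ^{MSO}`-equivalent if they satisfy the same
MSO formulas with `t` free vertex variables and `l` free set variables of
quantifier depth at most `k - t - l`. -/
def TMarkedEquiv (k t l : ℕ) (x y : TMarked t l) : Prop :=
  ∀ φ : TreeForm t l, φ.depth ≤ k - t - l →
    (TreeForm.Sat x.1 φ x.2.1 x.2.2 ↔ TreeForm.Sat y.1 φ y.2.1 y.2.2)

def tMarkedSetoid (k t l : ℕ) : Setoid (TMarked t l) where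
  r := TMarkedEquiv k t l
  iseqv := ⟨fun _ _ _ => Iff.rfl, fun h φ hφ => (h φ hφ).symm,
    fun h1 h2 φ hφ => (h1 φ hφ).trans (h2 φ hφ)⟩

/-- `EHR(k,t,l)` for the vocabulary of rooted trees. -/
def TreeEHR (k t l : ℕ) : Type := Quotient (tMarkedSetoid k t l)


/-!
When `t + l = k` no rounds of the game remain, so two marked structures are equivalent exactly
when they satisfy the same atomic formulas, and it suffices to count codes of atomic diagrams.

For graphs, adjacency and equality between marked vertices are symmetric with a fixed diagonal,
so they are determined by the pairs `j < i`; together with the membership bits this gives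
`t(t-1) + tl ≤ k² - k` bits.

For rooted trees the terms are the root and the `t` marked vertices. Since a vertex has at most
one parent, the equality and parent relations among the terms are recovered from recording, for
each term `i`, either the first earlier term equal to it or, at a first occurrence, the least
other term that is its parent (if any). This leaves `i + (t + 1)` choices for term `i`, hence
`∏_{i ≤ t} (i + t + 1) · 2^{(t+1)l}` codes.
-/

open Finset

theorem Setoid.finite_quotient_and_card_le {α β : Type*} [Finite β] {s : Setoid α}
    {f : α → β} (hs : s = Setoid.ker f) :
    Finite (Quotient s) ∧ Nat.card (Quotient s) ≤ Nat.card β := by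
  subst hs
  exact ⟨Finite.of_injective _ (Setoid.kerLift_injective f),
    Nat.card_le_card_of_injective _ (Setoid.kerLift_injective f)⟩

theorem SimpleGraph.IsTree.eq_of_adj_of_dist_eq_succ {V : Type*} {G : SimpleGraph V}
    (hG : G.IsTree) {r x x' y : V} (hx : G.Adj x y) (hx' : G.Adj x' y)
    (hdx : G.dist r y = G.dist r x + 1) (hdx' : G.dist r y = G.dist r x' + 1) : x = x' := by
  obtain ⟨p, hp⟩ := hG.connected.exists_walk_length_eq_dist r x
  obtain ⟨p', hp'⟩ := hG.connected.exists_walk_length_eq_dist r x'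
  have hpath : (p.concat hx).IsPath :=
    (p.concat hx).isPath_of_length_eq_dist (by rw [SimpleGraph.Walk.length_concat, hp, hdx])
  have hpath' : (p'.concat hx').IsPath :=
    (p'.concat hx').isPath_of_length_eq_dist (by rw [SimpleGraph.Walk.length_concat, hp', hdx'])
  have h := (hG.existsUnique_path r y).unique hpath hpath'
  simpa using congrArg SimpleGraph.Walk.penultimate h

theorem FinRootedTree.not_parent_self (T : FinRootedTree) (x : Fin T.n) : ¬ T.parent x x :=
  fun h => h.1.ne rfl

theorem FinRootedTree.leftUnique_parent (T : FinRootedTree) : Relator.LeftUnique T.parent :=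
  fun _ _ _ h h' => T.isTree.eq_of_adj_of_dist_eq_succ h.1 h'.1 h.2 h'.2

theorem MSOForm.sat_iff_of_depth_eq_zero {V V' : Type} {G : SimpleGraph V} {G' : SimpleGraph V'}
    {n m : ℕ} {φ : MSOForm n m} (hφ : φ.depth = 0) {v : Fin n → V} {s : Fin m → Set V}
    {v' : Fin n → V'} {s' : Fin m → Set V'}
    (hadj : ∀ i j, G.Adj (v i) (v j) ↔ G'.Adj (v' i) (v' j))
    (heq : ∀ i j, v i = v j ↔ v' i = v' j) (hmem : ∀ i j, v i ∈ s j ↔ v' i ∈ s' j) :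
    φ.Sat G v s ↔ φ.Sat G' v' s' := by
  induction φ with
  | adj i j => exact hadj i j
  | eq i j => exact heq i j
  | mem i j => exact hmem i j
  | not φ ih => exact not_congr (ih hφ hadj heq hmem)
  | and φ ψ ihφ ihψ =>
    rw [MSOForm.depth, Nat.max_eq_zero_iff] at hφ
    exact and_congr (ihφ hφ.1 hadj heq hmem) (ihψ hφ.2 hadj heq hmem)
  | allV => simp [MSOForm.depth] at hφ
  | allS => simp [MSOForm.depth] at hφ

theorem TreeForm.sat_iff_of_depth_eq_zero {T T' : FinRootedTree} {n m : ℕ} {φ : TreeForm n m}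
    (hφ : φ.depth = 0) {v : Fin n → Fin T.n} {s : Fin m → Set (Fin T.n)}
    {v' : Fin n → Fin T'.n} {s' : Fin m → Set (Fin T'.n)}
    (heq : ∀ a b, interpTerm T.root v a = interpTerm T.root v b ↔
      interpTerm T'.root v' a = interpTerm T'.root v' b)
    (hpar : ∀ a b, T.parent (interpTerm T.root v a) (interpTerm T.root v b) ↔
      T'.parent (interpTerm T'.root v' a) (interpTerm T'.root v' b))
    (hmem : ∀ a j, interpTerm T.root v a ∈ s j ↔ interpTerm T'.root v' a ∈ s' j) :
    φ.Sat T v s ↔ φ.Sat T' v' s' := by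
  induction φ with
  | par a b => exact hpar a b
  | eq a b => exact heq a b
  | mem a j => exact hmem a j
  | not φ ih => exact not_congr (ih hφ heq hpar hmem)
  | and φ ψ ihφ ihψ =>
    rw [TreeForm.depth, Nat.max_eq_zero_iff] at hφ
    exact and_congr (ihφ hφ.1 heq hpar hmem) (ihψ hφ.2 heq hpar hmem)
  | allV => simp [TreeForm.depth] at hφ
  | allS => simp [TreeForm.depth] at hφ

theorem interpTerm_finSuccEquiv {V : Type} (r : V) {n : ℕ} (v : Fin n → V) (i : Fin (n + 1)) :
    interpTerm r v (finSuccEquiv n i) = (Fin.cons r v : Fin (n + 1) → V) i := by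
  cases i using Fin.cases <;> simp [interpTerm]

section LowerTriangle

variable {n : ℕ}

def lowerTriangle (R : Fin n → Fin n → Prop) (i : Fin n) (j : Fin i) : Prop :=
  R (Fin.castLE i.isLt.le j) i

theorem lowerTriangle_eq_iff {R S : Fin n → Fin n → Prop} (hR : ∀ i j, R i j → R j i)
    (hS : ∀ i j, S i j → S j i) (hdiag : ∀ i, R i i ↔ S i i) :
    lowerTriangle R = lowerTriangle S ↔ R = S := by
  refine ⟨fun h => ?_, congrArg _⟩
  have hlt : ∀ i j : Fin n, j < i → (R j i ↔ S j i) := fun i j hji =>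
    eq_iff_iff.mp (congrFun (congrFun h i) ⟨j, hji⟩)
  funext i j
  refine propext ?_
  rcases lt_trichotomy i j with hij | rfl | hij
  · exact hlt j i hij
  · exact hdiag i
  · exact ⟨fun h => hS _ _ ((hlt i j hij).mp (hR _ _ h)),
      fun h => hR _ _ ((hlt i j hij).mpr (hS _ _ h))⟩

theorem card_lowerTriangle :
    Nat.card (∀ i : Fin n, Fin i → Prop) = 2 ^ ∑ i : Fin n, (i : ℕ) := by
  simp [Finset.prod_pow_eq_pow_sum]

end LowerTriangle

section PointerCode

variable {V V' : Type*} {n : ℕ}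

open Classical in
noncomputable def firstIndex (u : Fin n → V) (i : Fin n) : Fin n :=
  (univ.filter fun j => u j = u i).min' ⟨i, by simp⟩

open Classical in
noncomputable def parentIndex (P : V → V → Prop) (u : Fin n → V) (i : Fin n) :
    Option {j : Fin n // j ≠ i} :=
  if h : (univ.filter fun j : {j // j ≠ i} => P (u j) (u i)).Nonempty then some (min' _ h)
  else none

abbrev PointerCode (n : ℕ) : Type := ∀ i : Fin n, Fin i ⊕ Option {j : Fin n // j ≠ i}

noncomputable def pointerCode (P : V → V → Prop) (u : Fin n → V) : PointerCode n := fun i =>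
  if h : firstIndex u i < i then .inl ⟨firstIndex u i, h⟩ else .inr (parentIndex P u i)

theorem firstIndex_le (u : Fin n → V) (i : Fin n) : firstIndex u i ≤ i :=
  min'_le _ _ (by simp)

theorem apply_firstIndex (u : Fin n → V) (i : Fin n) : u (firstIndex u i) = u i := by
  classical
  unfold firstIndex
  generalize_proofs hs
  exact (mem_filter.mp (min'_mem _ hs)).2

theorem firstIndex_eq_firstIndex_iff {u : Fin n → V} {i j : Fin n} :
    firstIndex u i = firstIndex u j ↔ u i = u j := by
  refine ⟨fun h => by rw [← apply_firstIndex u i, h, apply_firstIndex u j], fun h => ?_⟩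
  unfold firstIndex
  congr 1
  ext
  simp [h]

theorem firstIndex_firstIndex (u : Fin n → V) (i : Fin n) :
    firstIndex u (firstIndex u i) = firstIndex u i :=
  firstIndex_eq_firstIndex_iff.mpr (apply_firstIndex u i)

theorem parent_iff_exists_parentIndex {P : V → V → Prop} (hirr : ∀ x, ¬ P x x)
    (huniq : Relator.LeftUnique P) (u : Fin n → V) (a i : Fin n) :
    P (u a) (u i) ↔ ∃ c, parentIndex P u i = some c ∧ u a = u c := by
  classical
  unfold parentIndex
  constructor
  · intro h
    have hs : (univ.filter fun j : {j // j ≠ i} => P (u j) (u i)).Nonempty :=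
      ⟨⟨a, fun e => hirr _ (e ▸ h)⟩, by simp [h]⟩
    rw [dif_pos hs]
    exact ⟨_, rfl, huniq h (mem_filter.mp (min'_mem _ hs)).2⟩
  · rintro ⟨c, hc, hac⟩
    split_ifs at hc with hs
    cases hc
    rw [hac]
    exact (mem_filter.mp (min'_mem _ hs)).2

variable {P : V → V → Prop} {P' : V' → V' → Prop} {u : Fin n → V}
  {u' : Fin n → V'}

theorem firstIndex_eq_of_pointerCode_eq (h : pointerCode P u = pointerCode P' u') (i : Fin n) :
    firstIndex u i = firstIndex u' i := by
  have hi := congrFun h i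
  unfold pointerCode at hi
  split_ifs at hi with hu _ hu'
  · simpa [Fin.ext_iff] using hi
  · rw [(firstIndex_le u i).antisymm (not_lt.mp hu),
      (firstIndex_le u' i).antisymm (not_lt.mp hu')]

theorem parentIndex_eq_of_pointerCode_eq (h : pointerCode P u = pointerCode P' u') {i : Fin n}
    (hi : firstIndex u i = i) : parentIndex P u i = parentIndex P' u' i := by
  have hi' : firstIndex u' i = i := firstIndex_eq_of_pointerCode_eq h i ▸ hi
  simpa [pointerCode, hi, hi'] using congrFun h i

theorem pointerCode_eq_iff (hirr : ∀ x, ¬ P x x) (huniq : Relator.LeftUnique P)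
    (hirr' : ∀ x, ¬ P' x x) (huniq' : Relator.LeftUnique P') :
    pointerCode P u = pointerCode P' u' ↔
      (∀ i j, u i = u j ↔ u' i = u' j) ∧ ∀ i j, P (u i) (u j) ↔ P' (u' i) (u' j) := by
  constructor
  · intro h
    have hfirst := firstIndex_eq_of_pointerCode_eq h
    have heq : ∀ i j, u i = u j ↔ u' i = u' j := fun i j => by
      rw [← firstIndex_eq_firstIndex_iff (u := u), ← firstIndex_eq_firstIndex_iff (u := u'),
        hfirst, hfirst]
    refine ⟨heq, fun i j => ?_⟩
    rw [← apply_firstIndex u j, ← apply_firstIndex u' j, ← hfirst j,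
      parent_iff_exists_parentIndex hirr huniq, parent_iff_exists_parentIndex hirr' huniq',
      parentIndex_eq_of_pointerCode_eq h (firstIndex_firstIndex u j)]
    exact exists_congr fun c => and_congr_right' (heq i c)
  · rintro ⟨heq, hpar⟩
    classical
    have hfirst : firstIndex u = firstIndex u' := by
      funext i
      unfold firstIndex
      congr 1
      ext
      simp [heq]
    have hparent : parentIndex P u = parentIndex P' u' := by
      funext i
      have hs : (univ.filter fun j : {j // j ≠ i} => P (u j) (u i)) =
          univ.filter fun j : {j // j ≠ i} => P' (u' j) (u' i) := by
        ext
        simp [hpar]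
      unfold parentIndex
      rw [hs]
    funext i
    simp only [pointerCode, hfirst, hparent]

theorem card_pointerCode : Nat.card (PointerCode n) = ∏ i : Fin n, ((i : ℕ) + n) := by
  rw [Nat.card_pi]
  refine prod_congr rfl fun i _ => ?_
  rw [Nat.card_sum, Nat.card_fin, Nat.card_congr (Equiv.optionSubtypeNe i), Nat.card_fin]

end PointerCode

theorem mul_succ_add_two_le_two_pow {k : ℕ} (hk : 5 ≤ k) : k * (k + 1) + 2 ≤ 2 ^ k := by
  induction k, hk using Nat.le_induction with
  | base => norm_num
  | succ k _ ih => rw [pow_succ]; nlinarith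

theorem two_mul_add_one_le_two_pow_max (t : ℕ) : 2 * t + 1 ≤ 2 ^ max t 3 := by
  rcases le_or_gt t 4 with ht | ht
  · interval_cases t <;> norm_num
  · rw [max_eq_left (by omega)]
    nlinarith [mul_succ_add_two_le_two_pow ht]

section Graph

variable {k t l : ℕ}

-- Codes are `Prop`-valued (a two-element type), so equal codes mean equivalent atomic formulas.
abbrev GraphCode (t l : ℕ) : Type :=
  (∀ i : Fin t, Fin i → Prop) × (∀ i : Fin t, Fin i → Prop) × (Fin t → Fin l → Prop)

def graphCode (x : GMarked t l) : GraphCode t l :=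
  (lowerTriangle fun i j => x.1.2.Adj (x.2.1 i) (x.2.1 j),
    lowerTriangle fun i j => x.2.1 i = x.2.1 j,
    fun i j => x.2.1 i ∈ x.2.2 j)

theorem graphCode_eq_iff {x y : GMarked t l} :
    graphCode x = graphCode y ↔
      (∀ i j, x.1.2.Adj (x.2.1 i) (x.2.1 j) ↔ y.1.2.Adj (y.2.1 i) (y.2.1 j)) ∧
      (∀ i j, x.2.1 i = x.2.1 j ↔ y.2.1 i = y.2.1 j) ∧
      ∀ i j, x.2.1 i ∈ x.2.2 j ↔ y.2.1 i ∈ y.2.2 j := by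
  simp only [graphCode, Prod.mk.injEq]
  rw [lowerTriangle_eq_iff (fun _ _ h => h.symm) (fun _ _ h => h.symm) (by simp),
    lowerTriangle_eq_iff (fun _ _ h => h.symm) (fun _ _ h => h.symm) (by simp)]
  simp only [funext_iff, eq_iff_iff]

theorem gMarkedEquiv_iff (h : t + l = k) {x y : GMarked t l} :
    GMarkedEquiv k t l x y ↔
      (∀ i j, x.1.2.Adj (x.2.1 i) (x.2.1 j) ↔ y.1.2.Adj (y.2.1 i) (y.2.1 j)) ∧
      (∀ i j, x.2.1 i = x.2.1 j ↔ y.2.1 i = y.2.1 j) ∧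
      ∀ i j, x.2.1 i ∈ x.2.2 j ↔ y.2.1 i ∈ y.2.2 j := by
  refine ⟨fun hxy => ⟨fun i j => hxy (.adj i j) (Nat.zero_le _),
    fun i j => hxy (.eq i j) (Nat.zero_le _), fun i j => hxy (.mem i j) (Nat.zero_le _)⟩, ?_⟩
  rintro ⟨hadj, heq, hmem⟩ φ hφ
  exact MSOForm.sat_iff_of_depth_eq_zero (by omega) hadj heq hmem

theorem gMarkedSetoid_eq_ker (h : t + l = k) : gMarkedSetoid k t l = Setoid.ker graphCode :=
  Setoid.ext fun _ _ => (gMarkedEquiv_iff h).trans graphCode_eq_iff.symm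

theorem card_graphCode_le (h : t + l = k) : Nat.card (GraphCode t l) ≤ 2 ^ (k ^ 2 - k) := by
  have hsum : 2 * ∑ i : Fin t, (i : ℕ) = t * (t - 1) := by
    rw [Fin.sum_univ_eq_sum_range (fun i => i) t, mul_comm, sum_range_id_mul_two]
  rw [Nat.card_prod, Nat.card_prod, card_lowerTriangle, Nat.card_fun, Nat.card_fun,
    Nat.card_eq_fintype_card (α := Prop), Fintype.card_prop, Nat.card_fin, Nat.card_fin,
    ← pow_mul, ← pow_add, ← pow_add]
  refine Nat.pow_le_pow_right two_pos ?_
  subst h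
  rcases t with _ | t
  · simp
  · apply Nat.le_sub_of_add_le
    simp only [Nat.add_sub_cancel] at hsum
    nlinarith

end Graph

section Tree

variable {k t l : ℕ}

def TMarked.terms (x : TMarked t l) : Fin (t + 1) → Fin x.1.n := Fin.cons x.1.root x.2.1

abbrev TreeCode (t l : ℕ) : Type := PointerCode (t + 1) × (Fin (t + 1) → Fin l → Prop)

noncomputable def treeCode (x : TMarked t l) : TreeCode t l :=
  (pointerCode x.1.parent x.terms, fun i j => x.terms i ∈ x.2.2 j)

theorem treeCode_eq_iff {x y : TMarked t l} :
    treeCode x = treeCode y ↔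
      (∀ i j, x.terms i = x.terms j ↔ y.terms i = y.terms j) ∧
      (∀ i j, x.1.parent (x.terms i) (x.terms j) ↔ y.1.parent (y.terms i) (y.terms j)) ∧
      ∀ i j, x.terms i ∈ x.2.2 j ↔ y.terms i ∈ y.2.2 j := by
  rw [treeCode, treeCode, Prod.mk.injEq, pointerCode_eq_iff x.1.not_parent_self
    x.1.leftUnique_parent y.1.not_parent_self y.1.leftUnique_parent, and_assoc]
  simp only [funext_iff, eq_iff_iff]

theorem tMarkedEquiv_iff (h : t + l = k) {x y : TMarked t l} :
    TMarkedEquiv k t l x y ↔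
      (∀ i j, x.terms i = x.terms j ↔ y.terms i = y.terms j) ∧
      (∀ i j, x.1.parent (x.terms i) (x.terms j) ↔ y.1.parent (y.terms i) (y.terms j)) ∧
      ∀ i j, x.terms i ∈ x.2.2 j ↔ y.terms i ∈ y.2.2 j := by
  have hterm (z : TMarked t l) (i : Fin (t + 1)) :
      interpTerm z.1.root z.2.1 (finSuccEquiv t i) = z.terms i :=
    interpTerm_finSuccEquiv _ _ i
  constructor
  · intro hxy
    refine ⟨fun i j => ?_, fun i j => ?_, fun i j => ?_⟩
    · simpa only [TreeForm.Sat, hterm] using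
        hxy (.eq (finSuccEquiv t i) (finSuccEquiv t j)) (Nat.zero_le _)
    · simpa only [TreeForm.Sat, hterm] using
        hxy (.par (finSuccEquiv t i) (finSuccEquiv t j)) (Nat.zero_le _)
    · simpa only [TreeForm.Sat, hterm] using hxy (.mem (finSuccEquiv t i) j) (Nat.zero_le _)
  · rintro ⟨heq, hpar, hmem⟩ φ hφ
    refine TreeForm.sat_iff_of_depth_eq_zero (by omega) ?_ ?_ ?_ <;>
      simpa only [(finSuccEquiv t).surjective.forall, hterm]

theorem tMarkedSetoid_eq_ker (h : t + l = k) : tMarkedSetoid k t l = Setoid.ker treeCode :=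
  Setoid.ext fun _ _ => (tMarkedEquiv_iff h).trans treeCode_eq_iff.symm

theorem card_treeCode (t l : ℕ) :
    Nat.card (TreeCode t l) = (∏ i : Fin (t + 1), ((i : ℕ) + (t + 1))) * (2 ^ l) ^ (t + 1) := by
  rw [Nat.card_prod, card_pointerCode, Nat.card_fun, Nat.card_fun,
    Nat.card_eq_fintype_card (α := Prop), Fintype.card_prop, Nat.card_fin, Nat.card_fin]


theorem card_treeCode_le_of_five_le (h : t + l = k) (hk : 5 ≤ k) :
    Nat.card (TreeCode t l) ≤ 2 ^ (2 ^ k - 2) := by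
  have hfactor (i : Fin (t + 1)) : (i : ℕ) + (t + 1) ≤ 2 ^ max t 3 :=
    (by omega : (i : ℕ) + (t + 1) ≤ 2 * t + 1).trans (two_mul_add_one_le_two_pow_max t)
  have hexp : (max t 3 + l) * (t + 1) ≤ 2 ^ k - 2 := by
    have := mul_succ_add_two_le_two_pow hk
    apply Nat.le_sub_of_add_le
    subst h
    rcases le_or_gt 3 t with ht | ht
    · rw [max_eq_left ht]; nlinarith
    · rw [max_eq_right ht.le]; nlinarith
  calc Nat.card (TreeCode t l)
      = (∏ i : Fin (t + 1), ((i : ℕ) + (t + 1))) * (2 ^ l) ^ (t + 1) := card_treeCode t l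
    _ ≤ (2 ^ max t 3) ^ (t + 1) * (2 ^ l) ^ (t + 1) := by
      gcongr
      simpa using prod_le_pow_card univ _ _ fun i _ => hfactor i
    _ = 2 ^ ((max t 3 + l) * (t + 1)) := by rw [← mul_pow, ← pow_add, ← pow_mul]
    _ ≤ 2 ^ (2 ^ k - 2) := Nat.pow_le_pow_right two_pos hexp

theorem card_treeCode_le_of_eq_four (h : t + l = k) (hk : k = 4) :
    Nat.card (TreeCode t l) ≤ 3 * 2 ^ 13 := by
  rw [card_treeCode]
  obtain rfl : l = 4 - t := by omega
  have ht : t ≤ 4 := by omega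
  interval_cases t <;> decide

end Tree

/-- for `t + l = k`, bounds on the number of `k`-Ehrenfeucht
values of graphs and of rooted trees with `t` marked vertices and `l` marked
subsets. -/
theorem ehr_values_bound (k t l : ℕ) (h : t + l = k) :
    (Finite (GraphEHR k t l) ∧ Nat.card (GraphEHR k t l) ≤ 2 ^ (k ^ 2 - k)) ∧
    (5 ≤ k → Finite (TreeEHR k t l) ∧ Nat.card (TreeEHR k t l) ≤ 2 ^ (2 ^ k - 2)) ∧
    (k = 4 → Finite (TreeEHR k t l) ∧ Nat.card (TreeEHR k t l) ≤ 3 * 2 ^ 13) := by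
  obtain ⟨graphFinite, graphCard⟩ := Setoid.finite_quotient_and_card_le (gMarkedSetoid_eq_ker h)
  obtain ⟨treeFinite, treeCard⟩ := Setoid.finite_quotient_and_card_le (tMarkedSetoid_eq_ker h)
  exact ⟨⟨graphFinite, graphCard.trans (card_graphCode_le h)⟩,
    fun hk => ⟨treeFinite, treeCard.trans (card_treeCode_le_of_five_le h hk)⟩,
    fun hk => ⟨treeFinite, treeCard.trans (card_treeCode_le_of_eq_four h hk)⟩⟩
end

section
/- For every real α > 1, the probability that G(n, n^{−α}) is a forest (contains no cycle) tends to 1 as n → ∞. -/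
/-! If `G(n,p)` is not a forest, it contains a cycle of some length `3 ≤ k ≤ n`, whose edge set
is `{f i, f (i + 1 mod k)}` for some `f : Fin k → Fin n`. There are at most `n ^ k` such `f`, and
the `k` edges are all present with probability `p ^ k`, so by the union bound
`P(G(n,p) is not a forest) ≤ ∑_{k ≥ 3} (n p) ^ k ≤ (n p) ^ 3 / (1 - n p)`,
which tends to `0` because `n p = n ^ (1 - α)`. -/

instance {V : Type} [Finite V] : Finite (SimpleGraph V) :=
  Finite.of_injective (fun G => G.Adj) fun _ _ h => SimpleGraph.ext h

noncomputable def edgeCount {n : ℕ} (H : SimpleGraph (Fin n)) : ℕ := H.edgeSet.ncard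

open Classical in
/-- The probability that the Erdős–Rényi random graph `G(n,p)` (each of the
`n.choose 2` possible edges present independently with probability `p`)
satisfies the property `Q`. -/
noncomputable def graphProb (n : ℕ) (p : ℝ) (Q : SimpleGraph (Fin n) → Prop) : ℝ :=
  haveI : Fintype (SimpleGraph (Fin n)) := Fintype.ofFinite _
  ∑ H : SimpleGraph (Fin n),
    if Q H then p ^ edgeCount H * (1 - p) ^ (n.choose 2 - edgeCount H) else 0

open Finset SimpleGraph Filter Topology
open scoped Classical

lemma sum_Icc_pow_mul_one_sub_pow {α R : Type*} [DecidableEq α] [CommRing R] {S s : Finset α}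
    (hS : S ⊆ s) (p : R) :
    ∑ t ∈ Icc S s, p ^ #t * (1 - p) ^ (#s - #t) = p ^ #S := by
  have hdisj : ∀ u ∈ (s \ S).powerset, Disjoint S u := fun u hu =>
    disjoint_sdiff.mono_right (mem_powerset.1 hu)
  rw [Icc_eq_image_powerset hS, sum_image fun u hu v hv huv => by
    simpa [union_sdiff_cancel_left (hdisj u hu), union_sdiff_cancel_left (hdisj v hv)]
      using congrArg (· \ S) huv]
  calc ∑ u ∈ (s \ S).powerset, p ^ #(S ∪ u) * (1 - p) ^ (#s - #(S ∪ u))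
      = ∑ u ∈ (s \ S).powerset, p ^ #S * (p ^ #u * (1 - p) ^ (#(s \ S) - #u)) := by
        refine sum_congr rfl fun u hu => ?_
        rw [card_union_of_disjoint (hdisj u hu), card_sdiff_of_subset hS, pow_add, mul_assoc,
          Nat.sub_add_eq]
    _ = p ^ #S := by rw [← mul_sum, sum_pow_mul_eq_add_pow, add_sub_cancel, one_pow, mul_one]

lemma sum_edgeFinset_eq_sum_powerset {V M : Type*} [Fintype V] [DecidableEq V] [AddCommMonoid M]
    (f : Finset (Sym2 V) → M) :
    ∑ H : SimpleGraph V, f H.edgeFinset =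
      ∑ t ∈ (⊤ : SimpleGraph V).edgeFinset.powerset, f t := by
  refine sum_nbij' (·.edgeFinset) (fun t => fromEdgeSet t) (fun H _ => ?_) (by simp)
    (fun H _ => by simp) (fun t ht => ?_) (fun _ _ => rfl)
  · exact mem_powerset.2 (edgeFinset_mono le_top)
  · rw [mem_powerset, ← coe_subset, coe_edgeFinset, edgeSet_top] at ht
    rw [← coe_inj, coe_edgeFinset, edgeSet_fromEdgeSet, sdiff_eq_left]
    exact disjoint_compl_left.mono_left ht

lemma SimpleGraph.Walk.getVert_finRotate {V : Type*} {G : SimpleGraph V} {v : V}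
    (w : G.Walk v v) (i : Fin w.length) :
    w.getVert (finRotate w.length i) = w.getVert (i + 1) := by
  have := i.neZero
  rw [finRotate_apply, Fin.val_add, Fin.val_one', Nat.add_mod_mod]
  rcases (show (i : ℕ) + 1 ≤ w.length from i.isLt).lt_or_eq with h | h
  · rw [Nat.mod_eq_of_lt h]
  · rw [h, Nat.mod_self, getVert_zero, getVert_length]

def cycleEdges {V : Type*} [DecidableEq V] {k : ℕ} (f : Fin k → V) : Finset (Sym2 V) :=
  univ.image fun i => s(f i, f (finRotate k i))

lemma SimpleGraph.Walk.cycleEdges_getVert {V : Type*} [DecidableEq V] {G : SimpleGraph V}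
    {v : V} (w : G.Walk v v) :
    cycleEdges (fun i : Fin w.length => w.getVert i) = w.edges.toFinset := by
  ext e
  simp only [cycleEdges, mem_image, mem_univ, true_and, List.mem_toFinset, List.mem_iff_getElem,
    getElem_edges, length_edges, getVert_finRotate]
  exact ⟨fun ⟨i, h⟩ => ⟨i, i.isLt, h⟩, fun ⟨i, hi, h⟩ => ⟨⟨i, hi⟩, h⟩⟩

lemma SimpleGraph.exists_cycleEdges_of_not_isAcyclic {V : Type*} [Fintype V] [DecidableEq V]
    {G : SimpleGraph V} (h : ¬ G.IsAcyclic) :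
    ∃ k ∈ Icc 3 (Fintype.card V), ∃ f : Fin k → V,
      #(cycleEdges f) = k ∧ ↑(cycleEdges f) ⊆ G.edgeSet := by
  obtain ⟨v, w, hw⟩ : ∃ v, ∃ w : G.Walk v v, w.IsCycle := by simpa [IsAcyclic] using h
  refine ⟨w.length, mem_Icc.2 ⟨hw.three_le_length, ?_⟩, fun i => w.getVert i, ?_, ?_⟩
  · simpa using hw.support_nodup.length_le_card
  · rw [w.cycleEdges_getVert, List.toFinset_card_of_nodup hw.edges_nodup, Walk.length_edges]
  · rw [w.cycleEdges_getVert, List.coe_toFinset]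
    exact w.edges_subset_edgeSet

section

variable {n : ℕ} {p : ℝ}

lemma graphProb_eq_sum_edgeFinset (Q : SimpleGraph (Fin n) → Prop) :
    graphProb n p Q = ∑ H : SimpleGraph (Fin n),
      if Q H then p ^ #H.edgeFinset * (1 - p) ^ (n.choose 2 - #H.edgeFinset) else 0 := by
  simp only [graphProb, edgeCount, ← Set.ncard_coe_finset, coe_edgeFinset]
  exact sum_congr (congrArg _ (Subsingleton.elim _ _)) fun _ _ => rfl

lemma graphProb_subset_edgeFinset {S : Finset (Sym2 (Fin n))}
    (hS : S ⊆ (⊤ : SimpleGraph (Fin n)).edgeFinset) :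
    graphProb n p (S ⊆ ·.edgeFinset) = p ^ #S := by
  rw [graphProb_eq_sum_edgeFinset]
  convert sum_edgeFinset_eq_sum_powerset
    (fun t => if S ⊆ t then p ^ #t * (1 - p) ^ (n.choose 2 - #t) else 0) |>.trans ?_
  have hIcc : {t ∈ (⊤ : SimpleGraph (Fin n)).edgeFinset.powerset | S ⊆ t} =
      Icc S (⊤ : SimpleGraph (Fin n)).edgeFinset := by
    ext t; simp [and_comm]
  have hN : n.choose 2 = #(⊤ : SimpleGraph (Fin n)).edgeFinset := by
    rw [card_edgeFinset_top_eq_card_choose_two, Fintype.card_fin]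
  rw [← sum_filter, hIcc, hN]
  exact sum_Icc_pow_mul_one_sub_pow hS p

lemma graphProb_add_graphProb_not (Q : SimpleGraph (Fin n) → Prop) :
    graphProb n p Q + graphProb n p (¬ Q ·) = 1 := by
  have h := graphProb_subset_edgeFinset (p := p)
    (empty_subset (⊤ : SimpleGraph (Fin n)).edgeFinset)
  rw [card_empty, pow_zero] at h
  rw [← h]
  simp only [graphProb_eq_sum_edgeFinset, ← sum_add_distrib, empty_subset, if_true]
  exact sum_congr rfl fun H _ => by split_ifs <;> simp

lemma graphProb_nonneg (hp₀ : 0 ≤ p) (hp₁ : p ≤ 1) (Q : SimpleGraph (Fin n) → Prop) :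
    0 ≤ graphProb n p Q := by
  rw [graphProb_eq_sum_edgeFinset]
  exact sum_nonneg fun H _ => by split_ifs <;> positivity

lemma graphProb_le_sum_of_forall_exists (hp₀ : 0 ≤ p) (hp₁ : p ≤ 1) {ι : Type*}
    (I : Finset ι) (A : ι → SimpleGraph (Fin n) → Prop) {Q : SimpleGraph (Fin n) → Prop}
    (hQ : ∀ H, Q H → ∃ i ∈ I, A i H) :
    graphProb n p Q ≤ ∑ i ∈ I, graphProb n p (A i) := by
  simp only [graphProb_eq_sum_edgeFinset]
  rw [sum_comm]
  refine sum_le_sum fun H _ => ?_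
  have hterm : ∀ i ∈ I,
      0 ≤ if A i H then p ^ #H.edgeFinset * (1 - p) ^ (n.choose 2 - #H.edgeFinset) else 0 :=
    fun i _ => by split_ifs <;> positivity
  split_ifs with hQH
  · obtain ⟨i, hi, hAi⟩ := hQ H hQH
    simpa [hAi] using single_le_sum hterm hi
  · exact sum_nonneg hterm

lemma graphProb_subset_edgeFinset_le (hp₀ : 0 ≤ p) (S : Finset (Sym2 (Fin n))) :
    graphProb n p (S ⊆ ·.edgeFinset) ≤ p ^ #S := by
  by_cases hS : S ⊆ (⊤ : SimpleGraph (Fin n)).edgeFinset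
  · exact (graphProb_subset_edgeFinset hS).le
  · have hempty : graphProb n p (S ⊆ ·.edgeFinset) = 0 := by
      rw [graphProb_eq_sum_edgeFinset]
      exact sum_eq_zero fun H _ => if_neg fun h => hS (h.trans (edgeFinset_mono le_top))
    rw [hempty]
    positivity

lemma graphProb_not_isAcyclic_le_sum (hp₀ : 0 ≤ p) (hp₁ : p ≤ 1) :
    graphProb n p (¬ ·.IsAcyclic) ≤ ∑ k ∈ Icc 3 n, (n * p) ^ k := by
  set I := (Icc 3 n).sigma fun k => {f : Fin k → Fin n | #(cycleEdges f) = k}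
  have hcover : ∀ H : SimpleGraph (Fin n), ¬ H.IsAcyclic →
      ∃ i ∈ I, cycleEdges i.2 ⊆ H.edgeFinset := by
    intro H hH
    obtain ⟨k, hk, f, hcard, hsub⟩ := exists_cycleEdges_of_not_isAcyclic hH
    rw [Fintype.card_fin] at hk
    exact ⟨⟨k, f⟩, mem_sigma.2 ⟨hk, mem_filter.2 ⟨mem_univ _, hcard⟩⟩,
      by rwa [← coe_subset, coe_edgeFinset]⟩
  calc graphProb n p (¬ ·.IsAcyclic)
      ≤ ∑ i ∈ I, graphProb n p (cycleEdges i.2 ⊆ ·.edgeFinset) :=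
        graphProb_le_sum_of_forall_exists hp₀ hp₁ I _ hcover
    _ ≤ ∑ i ∈ I, p ^ i.1 := sum_le_sum fun i hi =>
        (graphProb_subset_edgeFinset_le hp₀ _).trans_eq
          (by rw [(mem_filter.1 (mem_sigma.1 hi).2).2])
    _ = ∑ k ∈ Icc 3 n, #{f : Fin k → Fin n | #(cycleEdges f) = k} * p ^ k := by
        simp [I, sum_sigma]
    _ ≤ ∑ k ∈ Icc 3 n, (n * p) ^ k := sum_le_sum fun k _ => by
        rw [mul_pow]
        gcongr
        exact_mod_cast (card_filter_le _ _).trans_eq (by simp)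

lemma graphProb_not_isAcyclic_le_div (hp₀ : 0 ≤ p) (hp₁ : p ≤ 1) (hnp : n * p < 1) :
    graphProb n p (¬ ·.IsAcyclic) ≤ (n * p) ^ 3 / (1 - n * p) := by
  refine (graphProb_not_isAcyclic_le_sum hp₀ hp₁).trans ?_
  rw [← Ico_add_one_right_eq_Icc]
  exact geom_sum_Ico_le_of_lt_one (by positivity) hnp

end

/-- for every real `α > 1`, the probability that `G(n, n^{-α})`
is a forest (contains no cycle) tends to `1`. -/
theorem aas_forest (α : ℝ) (hα : 1 < α) :
    Filter.Tendsto (fun n => graphProb n ((n : ℝ) ^ (-α)) fun H => H.IsAcyclic)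
      Filter.atTop (nhds 1) := by
  set p : ℕ → ℝ := fun n => (n : ℝ) ^ (-α)
  have hp : ∀ᶠ n : ℕ in atTop, 0 ≤ p n ∧ p n ≤ 1 := by
    filter_upwards [eventually_ge_atTop 1] with n hn
    exact ⟨by positivity,
      Real.rpow_le_one_of_one_le_of_nonpos (by exact_mod_cast hn) (by linarith)⟩
  have hnp : Tendsto (fun n : ℕ => n * p n) atTop (𝓝 0) := by
    refine ((tendsto_rpow_neg_atTop (by linarith : 0 < α - 1)).comp
      tendsto_natCast_atTop_atTop).congr fun n => ?_
    rw [Function.comp_apply, ← Real.rpow_one_add' n.cast_nonneg (by linarith), neg_sub,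
      sub_eq_add_neg]
  have hbound : Tendsto (fun n : ℕ => (n * p n) ^ 3 / (1 - n * p n)) atTop (𝓝 0) := by
    have h := (hnp.pow 3).div (tendsto_const_nhds (x := (1 : ℝ)).sub hnp) (by norm_num)
    rwa [zero_pow three_ne_zero, zero_div] at h
  have hcyclic : Tendsto (fun n => graphProb n (p n) (¬ ·.IsAcyclic)) atTop (𝓝 0) := by
    refine squeeze_zero' ?_ ?_ hbound
    · filter_upwards [hp] with n hpn using graphProb_nonneg hpn.1 hpn.2 _
    · filter_upwards [hp, hnp.eventually (gt_mem_nhds one_pos)] with n hpn hnpn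
        using graphProb_not_isAcyclic_le_div hpn.1 hpn.2 hnpn
  have hforest := tendsto_const_nhds (x := (1 : ℝ)).sub hcyclic
  rw [sub_zero] at hforest
  exact hforest.congr fun n => by
    rw [← graphProb_add_graphProb_not (fun H => H.IsAcyclic), add_sub_cancel_right]
end
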